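/- (Moser averaging, nondegenerate case.) Let p₀(x,ξ,η) be a smooth function on an open set in ℝ³ (η a parameter) whose Hamiltonian flow in (x,ξ) — for the symplectic form dξ∧dx with η fixed — is 2π-periodic; concretely take p₀ = ζ = (x²+ξ²)/2 on {ζ > 0}. For any smooth g(x,ξ,η), define ⟨g⟩ = (1/2π)∫₀^{2π} g∘exp(tH_ζ) dt. Then, given f₀ = f₀(ζ,η) smooth with ∂_ζ f₀ ≠ 0 everywhere on the domain, there exists a unique smooth b with ⟨b⟩ = 0 and g = ⟨g⟩ + {f₀, b}. Moreover if g is independent of an angular variable y (in the extended phase space T*(ℝ_x × S¹_y) with p₀ depending only on (ζ,η)) then b is too, and b is smooth across {ζ = 0} when g is. -/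

import Mathlib

/-- Rotation by angle `t` in the `(x,ξ)`-plane: the Hamiltonian flow of `ζ = (x²+ξ²)/2`. -/
noncomputable def rotFlow (t : ℝ) (q : ℝ × ℝ) : ℝ × ℝ :=
  (q.1 * Real.cos t + q.2 * Real.sin t, q.2 * Real.cos t - q.1 * Real.sin t)

/-- The average of `g` over the (2π-periodic) Hamiltonian flow of `ζ`,
with `η = p.2` as a parameter. -/
noncomputable def flowAvg (g : (ℝ × ℝ) × ℝ → ℝ) (p : (ℝ × ℝ) × ℝ) : ℝ :=
  (2 * Real.pi)⁻¹ * ∫ t in (0:ℝ)..(2*Real.pi), g (rotFlow t p.1, p.2)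

/-- The Poisson bracket `{F, b} = ∂_ξ F ∂_x b − ∂_x F ∂_ξ b` in the `(x,ξ)` variables
(with `η` a parameter), for functions on `(ℝ²_{x,ξ}) × ℝ_η`. -/
noncomputable def pbrk (F b : (ℝ × ℝ) × ℝ → ℝ) (p : (ℝ × ℝ) × ℝ) : ℝ :=
  fderiv ℝ F p ((0,1),0) * fderiv ℝ b p ((1,0),0)
    - fderiv ℝ F p ((1,0),0) * fderiv ℝ b p ((0,1),0)

set_option maxHeartbeats 1000000
set_option synthInstance.maxHeartbeats 100000

open intervalIntegral MeasureTheory Set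

section Param

variable {H : Type*} [NormedAddCommGroup H] [NormedSpace ℝ H] [FiniteDimensional ℝ H]

/-- Differentiation under the interval integral for a smooth integrand. -/
theorem hasFDerivAt_parametric {G : Type*} [NormedAddCommGroup G] [NormedSpace ℝ G]
    [CompleteSpace G] (F : ℝ × H → G) (hF : ContDiff ℝ (⊤ : ℕ∞) F) (a b : ℝ) (p₀ : H) :
    HasFDerivAt (fun p : H => ∫ t in a..b, F (t, p))
      (∫ t in a..b, (fderiv ℝ F (t, p₀)).comp (ContinuousLinearMap.inr ℝ ℝ H)) p₀ := by
  have hFc : Continuous F := hF.continuous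
  have hF' : Continuous (fun q : ℝ × H => (fderiv ℝ F q).comp (ContinuousLinearMap.inr ℝ ℝ H)) := by
    exact ((hF.fderiv_right (m := (⊤ : ℕ∞)) (by simp)).continuous).clm_comp continuous_const
  -- compact bound
  obtain ⟨C, hC⟩ : ∃ C, ∀ q ∈ (uIcc a b) ×ˢ Metric.closedBall p₀ 1,
      ‖(fderiv ℝ F q).comp (ContinuousLinearMap.inr ℝ ℝ H)‖ ≤ C := by
    obtain ⟨C, hC⟩ := (isCompact_uIcc.prod (isCompact_closedBall p₀ 1)).exists_bound_of_continuousOn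
      hF'.continuousOn
    exact ⟨C, hC⟩
  have key : ∀ (t : ℝ) (x : H), HasFDerivAt (fun y => F (t, y))
      ((fderiv ℝ F (t, x)).comp (ContinuousLinearMap.inr ℝ ℝ H)) x := by
    intro t x
    have h1 : HasFDerivAt F (fderiv ℝ F (t, x)) (t, x) :=
      (hF.differentiable (by simp) (t, x)).hasFDerivAt
    have h2 : HasFDerivAt (fun y : H => ((t, y) : ℝ × H))
        (ContinuousLinearMap.inr ℝ ℝ H) x :=
      (hasFDerivAt_const t x).prodMk (hasFDerivAt_id x)
    exact h1.comp x h2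
  exact intervalIntegral.hasFDerivAt_integral_of_dominated_of_fderiv_le (μ := volume)
    (F := fun x t => F (t, x))
    (F' := fun x t => (fderiv ℝ F (t, x)).comp (ContinuousLinearMap.inr ℝ ℝ H))
    (bound := fun _ => C) (Metric.ball_mem_nhds p₀ one_pos)
    (Filter.Eventually.of_forall fun x =>
      (hFc.comp (continuous_id.prodMk continuous_const)).aestronglyMeasurable)
    ((hFc.comp (continuous_id.prodMk continuous_const)).intervalIntegrable a b)
    (hF'.comp (continuous_id.prodMk continuous_const)).aestronglyMeasurable
    (Filter.Eventually.of_forall fun t ht x hx =>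
      hC (t, x) ⟨uIoc_subset_uIcc ht, Metric.ball_subset_closedBall hx⟩)
    (intervalIntegrable_const)
    (Filter.Eventually.of_forall fun t _ x _ => key t x)

end Param

section Param2
variable {H : Type} [NormedAddCommGroup H] [NormedSpace ℝ H] [FiniteDimensional ℝ H]

theorem contDiff_parametric_aux (a b : ℝ) (n : ℕ) :
    ∀ {G : Type} [NormedAddCommGroup G] [NormedSpace ℝ G] [CompleteSpace G]
      (F : ℝ × H → G), ContDiff ℝ (⊤ : ℕ∞) F →
      ContDiff ℝ (n : ℕ) (fun p : H => ∫ t in a..b, F (t, p)) := by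
  induction n with
  | zero =>
    intro G _ _ _ F hF
    rw [show ((0 : ℕ) : WithTop ℕ∞) = 0 from rfl, contDiff_zero]
    exact intervalIntegral.continuous_parametric_intervalIntegral_of_continuous'
      (f := fun p t => F (t, p)) (hF.continuous.comp continuous_swap) a b
  | succ n ih =>
    intro G _ _ _ F hF
    have hdiff := fun p₀ => hasFDerivAt_parametric F hF a b p₀
    rw [show ((n + 1 : ℕ) : WithTop ℕ∞) = (n : ℕ) + 1 by push_cast; rfl,
      contDiff_succ_iff_fderiv]
    refine ⟨fun p => (hdiff p).differentiableAt, by simp, ?_⟩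
    have heq : fderiv ℝ (fun p : H => ∫ t in a..b, F (t, p)) =
        fun p₀ => ∫ t in a..b, (fderiv ℝ F (t, p₀)).comp (ContinuousLinearMap.inr ℝ ℝ H) :=
      funext fun p₀ => (hdiff p₀).fderiv
    rw [heq]
    exact ih (fun q => (fderiv ℝ F q).comp (ContinuousLinearMap.inr ℝ ℝ H))
      (((hF.fderiv_right (m := (⊤ : ℕ∞)) (by simp)).clm_comp contDiff_const))

theorem contDiff_parametric {G : Type} [NormedAddCommGroup G] [NormedSpace ℝ G]
    [CompleteSpace G] {F : ℝ × H → G} (hF : ContDiff ℝ (⊤ : ℕ∞) F) (a b : ℝ) :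
    ContDiff ℝ (⊤ : ℕ∞) (fun p : H => ∫ t in a..b, F (t, p)) := by
  exact contDiff_infty.2 fun n => contDiff_parametric_aux a b n F hF

end Param2

open Real

lemma rotFlow_zero (q : ℝ × ℝ) : rotFlow 0 q = q := by simp [rotFlow]

lemma rotFlow_comp (t s : ℝ) (q : ℝ × ℝ) : rotFlow t (rotFlow s q) = rotFlow (t + s) q := by
  simp only [rotFlow, Real.cos_add, Real.sin_add, Prod.mk.injEq]
  constructor <;> ring

lemma rotFlow_periodic (q : ℝ × ℝ) : Function.Periodic (fun t => rotFlow t q) (2 * π) := by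
  intro t
  simp [rotFlow, Real.cos_add_two_pi, Real.sin_add_two_pi]

lemma hasDerivAt_rotFlow (q : ℝ × ℝ) (t : ℝ) :
    HasDerivAt (fun s => rotFlow s q) ((rotFlow t q).2, -(rotFlow t q).1) t := by
  have h1 : HasDerivAt (fun s => q.1 * Real.cos s + q.2 * Real.sin s)
      (q.2 * Real.cos t - q.1 * Real.sin t) t := by
    have := ((Real.hasDerivAt_cos t).const_mul q.1).add ((Real.hasDerivAt_sin t).const_mul q.2)
    exact this.congr_deriv (by ring)
  have h2 : HasDerivAt (fun s => q.2 * Real.cos s - q.1 * Real.sin s)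
      (-(q.1 * Real.cos t + q.2 * Real.sin t)) t := by
    have := ((Real.hasDerivAt_cos t).const_mul q.2).sub ((Real.hasDerivAt_sin t).const_mul q.1)
    exact this.congr_deriv (by ring)
  exact h1.prodMk h2

lemma zeta_rotFlow (t : ℝ) (q : ℝ × ℝ) :
    (rotFlow t q).1 ^ 2 + (rotFlow t q).2 ^ 2 = q.1 ^ 2 + q.2 ^ 2 := by
  simp only [rotFlow]
  have h := Real.sin_sq_add_cos_sq t
  nlinarith [h]

lemma contDiff_rotFlow : ContDiff ℝ (⊤ : ℕ∞) (fun z : ℝ × (ℝ × ℝ) => rotFlow z.1 z.2) := by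
  unfold rotFlow
  apply ContDiff.prodMk
  · exact (contDiff_snd.fst.mul (Real.contDiff_cos.comp contDiff_fst)).add
      (contDiff_snd.snd.mul (Real.contDiff_sin.comp contDiff_fst))
  · exact (contDiff_snd.snd.mul (Real.contDiff_cos.comp contDiff_fst)).sub
      (contDiff_snd.fst.mul (Real.contDiff_sin.comp contDiff_fst))

lemma contDiff_flowMap : ContDiff ℝ (⊤ : ℕ∞)
    (fun z : ℝ × ((ℝ × ℝ) × ℝ) => ((rotFlow z.1 z.2.1, z.2.2) : (ℝ × ℝ) × ℝ)) :=
  (contDiff_rotFlow.comp (contDiff_fst.prodMk contDiff_snd.fst)).prodMk contDiff_snd.snd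

lemma contDiff_flowAvg {u : (ℝ × ℝ) × ℝ → ℝ} (hu : ContDiff ℝ (⊤ : ℕ∞) u) :
    ContDiff ℝ (⊤ : ℕ∞) (flowAvg u) :=
  contDiff_const.mul (contDiff_parametric (hu.comp contDiff_flowMap) 0 (2 * π))

lemma flowAvg_flow (u : (ℝ × ℝ) × ℝ → ℝ) (s : ℝ) (p : (ℝ × ℝ) × ℝ) :
    flowAvg u (rotFlow s p.1, p.2) = flowAvg u p := by
  unfold flowAvg
  congr 1
  have h1 : ∀ t : ℝ, u (rotFlow t (rotFlow s p.1), p.2) = u (rotFlow (t + s) p.1, p.2) := by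
    intro t; rw [rotFlow_comp]
  simp only [h1]
  rw [intervalIntegral.integral_comp_add_right (fun t => u (rotFlow t p.1, p.2)) s]
  have hper : Function.Periodic (fun t => u (rotFlow t p.1, p.2)) (2 * π) := by
    intro t; simp [rotFlow_periodic p.1 t]
  have := hper.intervalIntegral_add_eq s 0
  simpa [add_comm] using this

lemma flowAvg_of_invariant {u : (ℝ × ℝ) × ℝ → ℝ}
    (hinv : ∀ s p, u (rotFlow s p.1, p.2) = u p) (p : (ℝ × ℝ) × ℝ) :
    flowAvg u p = u p := by
  simp only [flowAvg, hinv]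
  rw [intervalIntegral.integral_const]
  have : (2 * π) ≠ 0 := by positivity
  field_simp
  rw [sub_zero, smul_eq_mul]

lemma hasDerivAt_along {u : (ℝ × ℝ) × ℝ → ℝ} (hu : Differentiable ℝ u)
    (p : (ℝ × ℝ) × ℝ) (s : ℝ) :
    HasDerivAt (fun t => u (rotFlow t p.1, p.2))
      (fderiv ℝ u (rotFlow s p.1, p.2) (((rotFlow s p.1).2, -(rotFlow s p.1).1), 0)) s :=
  (hu _).hasFDerivAt.comp_hasDerivAt s ((hasDerivAt_rotFlow p.1 s).prodMk (hasDerivAt_const s p.2))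

lemma fderiv_along_flow_zero {u : (ℝ × ℝ) × ℝ → ℝ} (hu : Differentiable ℝ u)
    (hinv : ∀ s p, u (rotFlow s p.1, p.2) = u p) (p : (ℝ × ℝ) × ℝ) :
    fderiv ℝ u p ((p.1.2, -p.1.1), 0) = 0 := by
  have h1 := hasDerivAt_along hu p 0
  rw [rotFlow_zero] at h1
  have h2 : (fun t => u (rotFlow t p.1, p.2)) = fun _ => u p := funext fun s => hinv s p
  rw [h2] at h1
  have h3 : HasDerivAt (fun _ : ℝ => u p) 0 0 := hasDerivAt_const 0 (u p)
  exact h1.unique h3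

open ContinuousLinearMap in
lemma hasFDerivAt_zetamap (p : (ℝ × ℝ) × ℝ) :
    HasFDerivAt (fun q : (ℝ × ℝ) × ℝ => (((q.1.1 ^ 2 + q.1.2 ^ 2) / 2 : ℝ), q.2))
      (((p.1.1 • ((fst ℝ ℝ ℝ).comp (fst ℝ (ℝ × ℝ) ℝ)) +
          p.1.2 • ((snd ℝ ℝ ℝ).comp (fst ℝ (ℝ × ℝ) ℝ))).prod (snd ℝ (ℝ × ℝ) ℝ))) p := by
  apply HasFDerivAt.prodMk
  · have hx : HasFDerivAt (fun q : (ℝ × ℝ) × ℝ => q.1.1)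
        ((fst ℝ ℝ ℝ).comp (fst ℝ (ℝ × ℝ) ℝ)) p := hasFDerivAt_fst.comp p hasFDerivAt_fst
    have hy : HasFDerivAt (fun q : (ℝ × ℝ) × ℝ => q.1.2)
        ((snd ℝ ℝ ℝ).comp (fst ℝ (ℝ × ℝ) ℝ)) p := hasFDerivAt_snd.comp p hasFDerivAt_fst
    have h := ((hx.mul hx).add (hy.mul hy)).const_mul (1/2 : ℝ)
    have heq : (fun q : (ℝ × ℝ) × ℝ => (1/2 : ℝ) * (q.1.1 * q.1.1 + q.1.2 * q.1.2)) =
        (fun q : (ℝ × ℝ) × ℝ => (q.1.1 ^ 2 + q.1.2 ^ 2) / 2) := by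
      funext q; ring
    simp only [Pi.mul_apply, Pi.add_apply] at h
    rw [heq] at h
    exact h.congr_fderiv (by ext v <;> simp <;> ring)
  · exact hasFDerivAt_snd

lemma fderiv_comp_zeta {f₀ : ℝ × ℝ → ℝ} (hf₀ : ContDiff ℝ (⊤ : ℕ∞) f₀)
    (p v : (ℝ × ℝ) × ℝ) :
    fderiv ℝ (fun q : (ℝ × ℝ) × ℝ => f₀ ((q.1.1 ^ 2 + q.1.2 ^ 2) / 2, q.2)) p v
      = fderiv ℝ f₀ ((p.1.1 ^ 2 + p.1.2 ^ 2) / 2, p.2) (p.1.1 * v.1.1 + p.1.2 * v.1.2, v.2) := by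
  have hm := hasFDerivAt_zetamap p
  have hf := (hf₀.differentiable (by simp) ((p.1.1 ^ 2 + p.1.2 ^ 2) / 2, p.2)).hasFDerivAt
  have hcomp := hf.comp p hm
  rw [show (f₀ ∘ fun q : (ℝ × ℝ) × ℝ => ((q.1.1 ^ 2 + q.1.2 ^ 2) / 2, q.2)) =
    (fun q : (ℝ × ℝ) × ℝ => f₀ ((q.1.1 ^ 2 + q.1.2 ^ 2) / 2, q.2)) from rfl] at hcomp
  rw [hcomp.fderiv]
  simp

lemma contDiff_Bfun {h : (ℝ × ℝ) × ℝ → ℝ} (hh : ContDiff ℝ (⊤ : ℕ∞) h) :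
    ContDiff ℝ (⊤ : ℕ∞)
      (fun p : (ℝ × ℝ) × ℝ => (2 * π)⁻¹ * ∫ t in (0:ℝ)..(2 * π), t * h (rotFlow t p.1, p.2)) :=
  contDiff_const.mul (contDiff_parametric
    ((contDiff_fst.mul (hh.comp contDiff_flowMap))) 0 (2 * π))

lemma key_LB {h : (ℝ × ℝ) × ℝ → ℝ} (hh : ContDiff ℝ (⊤ : ℕ∞) h)
    (havg : ∀ p, flowAvg h p = 0) (p : (ℝ × ℝ) × ℝ) :
    fderiv ℝ (fun p' : (ℝ × ℝ) × ℝ =>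
        (2 * π)⁻¹ * ∫ t in (0:ℝ)..(2 * π), t * h (rotFlow t p'.1, p'.2)) p
      ((p.1.2, -p.1.1), 0) = h p := by
  set B : (ℝ × ℝ) × ℝ → ℝ :=
    fun p' => (2 * π)⁻¹ * ∫ t in (0:ℝ)..(2 * π), t * h (rotFlow t p'.1, p'.2) with hBdef
  have hB : ContDiff ℝ (⊤ : ℕ∞) B := contDiff_Bfun hh
  set φ : ℝ → ℝ := fun t => h (rotFlow t p.1, p.2) with hφdef
  have hφc : Continuous φ :=
    (hh.continuous).comp (((contDiff_rotFlow.continuous).comp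
      (continuous_id.prodMk continuous_const)).prodMk continuous_const)
  have hper : Function.Periodic φ (2 * π) := by
    intro t; simp only [hφdef, rotFlow_periodic p.1 t]
  have hint0 : (∫ t in (0:ℝ)..(2 * π), φ t) = 0 := by
    have := havg p
    unfold flowAvg at this
    have h2π : ((2 * π)⁻¹ : ℝ) ≠ 0 := by positivity
    field_simp at this
    rw [mul_zero] at this
    exact this
  -- Step 1: formula for B along the flow
  have step1 : ∀ s : ℝ, B (rotFlow s p.1, p.2) = (2 * π)⁻¹ * ∫ u in s..(s + 2 * π), u * φ u := by
    intro s
    have e1 : (fun t => t * h (rotFlow t (rotFlow s p.1), p.2)) =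
        fun t => (fun u => (u - s) * φ u) (t + s) := by
      funext t
      simp only [rotFlow_comp, hφdef]
      ring_nf
    rw [hBdef]
    simp only [e1]
    rw [intervalIntegral.integral_comp_add_right (fun u => (u - s) * φ u) s]
    have e2 : (∫ u in (0 + s)..(2 * π + s), (u - s) * φ u)
        = (∫ u in s..(s + 2 * π), u * φ u) - s * ∫ u in s..(s + 2 * π), φ u := by
      rw [zero_add, show (2 * π + s) = s + 2 * π by ring]
      rw [← intervalIntegral.integral_const_mul]
      rw [show (fun u => (u - s) * φ u) = fun u => u * φ u - s * φ u from funext fun u => by ring]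
      exact intervalIntegral.integral_sub ((continuous_id'.mul hφc).intervalIntegrable _ _)
        ((continuous_const.mul hφc).intervalIntegrable _ _)
    rw [e2, hper.intervalIntegral_add_eq s 0, zero_add, hint0]
    ring
  -- Step 2: derivative of right-hand side at 0
  have hΦ : ∀ x : ℝ, HasDerivAt (fun y => ∫ u in (0:ℝ)..y, u * φ u) (x * φ x) x :=
    fun x => ((continuous_id'.mul hφc).integral_hasStrictDerivAt 0 x).hasDerivAt
  have hsplit : ∀ s : ℝ, (∫ u in s..(s + 2 * π), u * φ u)
      = (∫ u in (0:ℝ)..(s + 2 * π), u * φ u) - ∫ u in (0:ℝ)..s, u * φ u := by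
    intro s
    rw [eq_sub_iff_add_eq]
    rw [add_comm]
    exact intervalIntegral.integral_add_adjacent_intervals
      ((continuous_id'.mul hφc).intervalIntegrable _ _)
      ((continuous_id'.mul hφc).intervalIntegrable _ _)
  have hd2 : HasDerivAt (fun s : ℝ => (2 * π)⁻¹ * ∫ u in s..(s + 2 * π), u * φ u)
      ((2 * π)⁻¹ * (((0 + 2 * π) * φ (0 + 2 * π)) * 1 - 0 * φ 0)) 0 := by
    have hcomp : HasDerivAt (fun s : ℝ => ∫ u in (0:ℝ)..(s + 2 * π), u * φ u)
        (((0 + 2 * π) * φ (0 + 2 * π)) * 1) 0 :=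
      by have := (hΦ (0 + 2 * π)).comp 0 ((hasDerivAt_id 0).add_const (2 * π)); exact this
    have := (hcomp.sub (hΦ 0)).const_mul ((2 * π)⁻¹ : ℝ)
    simpa only [hsplit, Pi.sub_apply] using this
  -- Step 3: derivative of B along the flow at 0
  have hd1 : HasDerivAt (fun s => B (rotFlow s p.1, p.2))
      (fderiv ℝ B p ((p.1.2, -p.1.1), 0)) 0 := by
    have := hasDerivAt_along (hB.differentiable (by simp)) p 0
    rwa [rotFlow_zero] at this
  have hfun : (fun s => B (rotFlow s p.1, p.2))
      = fun s : ℝ => (2 * π)⁻¹ * ∫ u in s..(s + 2 * π), u * φ u := funext step1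
  rw [hfun] at hd1
  have := hd1.unique hd2
  rw [this]
  have hφ2π : φ (0 + 2 * π) = φ 0 := hper 0
  rw [hφ2π]
  have hπ : (2 * π : ℝ) ≠ 0 := by positivity
  have : φ 0 = h p := by simp [hφdef, rotFlow_zero]
  rw [← this]
  field_simp
  ring

noncomputable def Dfn (f₀ : ℝ × ℝ → ℝ) (p : (ℝ × ℝ) × ℝ) : ℝ :=
  fderiv ℝ f₀ ((p.1.1 ^ 2 + p.1.2 ^ 2) / 2, p.2) (1, 0)

lemma contDiff_zetamap : ContDiff ℝ (⊤ : ℕ∞)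
    (fun q : (ℝ × ℝ) × ℝ => (((q.1.1 ^ 2 + q.1.2 ^ 2) / 2 : ℝ), q.2)) :=
  (((contDiff_fst.fst.pow 2).add (contDiff_fst.snd.pow 2)).div_const 2).prodMk contDiff_snd

lemma contDiff_Dfn {f₀ : ℝ × ℝ → ℝ} (hf₀ : ContDiff ℝ (⊤ : ℕ∞) f₀) :
    ContDiff ℝ (⊤ : ℕ∞) (Dfn f₀) :=
  ((hf₀.fderiv_right (m := (⊤ : ℕ∞)) (by simp)).comp contDiff_zetamap).clm_apply contDiff_const

lemma Dfn_invariant (f₀ : ℝ × ℝ → ℝ) (t : ℝ) (p : (ℝ × ℝ) × ℝ) :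
    Dfn f₀ (rotFlow t p.1, p.2) = Dfn f₀ p := by
  unfold Dfn
  rw [show ((rotFlow t p.1).1 ^ 2 + (rotFlow t p.1).2 ^ 2) = p.1.1 ^ 2 + p.1.2 ^ 2 from
    zeta_rotFlow t p.1]

lemma fderiv_J_eq (b : (ℝ × ℝ) × ℝ → ℝ) (p : (ℝ × ℝ) × ℝ) :
    fderiv ℝ b p ((p.1.2, -p.1.1), 0) =
      p.1.2 * fderiv ℝ b p ((1, 0), 0) - p.1.1 * fderiv ℝ b p ((0, 1), 0) := by
  have hv : (((p.1.2, -p.1.1), (0:ℝ)) : (ℝ × ℝ) × ℝ)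
      = p.1.2 • (((1:ℝ), (0:ℝ)), (0:ℝ)) - p.1.1 • (((0:ℝ), (1:ℝ)), (0:ℝ)) := by
    simp [Prod.ext_iff]
  rw [hv, map_sub, _root_.map_smul, _root_.map_smul, smul_eq_mul, smul_eq_mul]

lemma pbrk_eq {f₀ : ℝ × ℝ → ℝ} (hf₀ : ContDiff ℝ (⊤ : ℕ∞) f₀)
    (b : (ℝ × ℝ) × ℝ → ℝ) (p : (ℝ × ℝ) × ℝ) :
    pbrk (fun q : (ℝ × ℝ) × ℝ => f₀ ((q.1.1 ^ 2 + q.1.2 ^ 2) / 2, q.2)) b p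
      = Dfn f₀ p * fderiv ℝ b p ((p.1.2, -p.1.1), 0) := by
  unfold pbrk
  rw [fderiv_comp_zeta hf₀ p ((0, 1), 0), fderiv_comp_zeta hf₀ p ((1, 0), 0), fderiv_J_eq]
  simp only [mul_zero, mul_one, zero_add, add_zero]
  have e1 : ((p.1.2, (0:ℝ)) : ℝ × ℝ) = p.1.2 • ((1:ℝ), (0:ℝ)) := by simp
  have e2 : ((p.1.1, (0:ℝ)) : ℝ × ℝ) = p.1.1 • ((1:ℝ), (0:ℝ)) := by simp
  rw [e1, e2, _root_.map_smul, _root_.map_smul, smul_eq_mul, smul_eq_mul]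
  unfold Dfn
  ring

lemma cont_along {u : (ℝ × ℝ) × ℝ → ℝ} (hu : Continuous u) (p : (ℝ × ℝ) × ℝ) :
    Continuous fun t => u (rotFlow t p.1, p.2) :=
  hu.comp (((contDiff_rotFlow.continuous).comp
    (continuous_id.prodMk continuous_const)).prodMk continuous_const)

lemma flowAvg_sub {u v : (ℝ × ℝ) × ℝ → ℝ} (hu : Continuous u) (hv : Continuous v)
    (p : (ℝ × ℝ) × ℝ) :
    flowAvg (fun q => u q - v q) p = flowAvg u p - flowAvg v p := by
  unfold flowAvg
  rw [intervalIntegral.integral_sub ((cont_along hu p).intervalIntegrable _ _)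
    ((cont_along hv p).intervalIntegrable _ _)]
  ring

theorem stmt13 (g : (ℝ × ℝ) × ℝ → ℝ) (hg : ContDiff ℝ (⊤ : ℕ∞) g)
    (f₀ : ℝ × ℝ → ℝ) (hf₀ : ContDiff ℝ (⊤ : ℕ∞) f₀)
    (hf₀' : ∀ w : ℝ × ℝ, fderiv ℝ f₀ w (1, 0) ≠ 0) :
    ∃! b : (ℝ × ℝ) × ℝ → ℝ, ContDiff ℝ (⊤ : ℕ∞) b ∧ (∀ p, flowAvg b p = 0) ∧
      ∀ p : (ℝ × ℝ) × ℝ,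
        g p = flowAvg g p +
          pbrk (fun q : (ℝ × ℝ) × ℝ => f₀ ((q.1.1^2 + q.1.2^2)/2, q.2)) b p := by
  have hDne : ∀ p, Dfn f₀ p ≠ 0 := fun p => hf₀' _
  have hD : ContDiff ℝ (⊤ : ℕ∞) (Dfn f₀) := contDiff_Dfn hf₀
  have hGavg : ContDiff ℝ (⊤ : ℕ∞) (flowAvg g) := contDiff_flowAvg hg
  set h : (ℝ × ℝ) × ℝ → ℝ := fun q => g q - flowAvg g q with hhdef
  have hh : ContDiff ℝ (⊤ : ℕ∞) h := hg.sub hGavg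
  have havg : ∀ p, flowAvg h p = 0 := by
    intro p
    rw [hhdef, flowAvg_sub hg.continuous hGavg.continuous p,
      flowAvg_of_invariant (fun s q => flowAvg_flow g s q) p, sub_self]
  set B : (ℝ × ℝ) × ℝ → ℝ :=
    fun p => (2 * π)⁻¹ * ∫ t in (0:ℝ)..(2 * π), t * h (rotFlow t p.1, p.2) with hBdef
  have hB : ContDiff ℝ (⊤ : ℕ∞) B := contDiff_Bfun hh
  have hBavg : ContDiff ℝ (⊤ : ℕ∞) (flowAvg B) := contDiff_flowAvg hB
  set bt : (ℝ × ℝ) × ℝ → ℝ := fun p => B p - flowAvg B p with hbtdef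
  have hbt : ContDiff ℝ (⊤ : ℕ∞) bt := hB.sub hBavg
  set b : (ℝ × ℝ) × ℝ → ℝ := fun p => bt p / Dfn f₀ p with hbdef
  have hb : ContDiff ℝ (⊤ : ℕ∞) b := hbt.div hD hDne
  -- bt is invariant-compatible: its flow derivative equals h
  have hbtJ : ∀ p, fderiv ℝ bt p ((p.1.2, -p.1.1), 0) = h p := by
    intro p
    have hsub : fderiv ℝ bt p = fderiv ℝ B p - fderiv ℝ (flowAvg B) p := by
      rw [hbtdef]
      exact fderiv_sub ((hB.differentiable (by simp)) p) ((hBavg.differentiable (by simp)) p)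
    rw [hsub]
    simp only [ContinuousLinearMap.coe_sub', Pi.sub_apply]
    rw [hBdef] at *
    rw [key_LB hh havg p,
      fderiv_along_flow_zero (hBavg.differentiable (by simp)) (fun s q => flowAvg_flow B s q) p,
      sub_zero]
  -- flow derivative of b
  have hbJ : ∀ p, fderiv ℝ b p ((p.1.2, -p.1.1), 0) = h p / Dfn f₀ p := by
    intro p
    have h1 : HasDerivAt (fun s => b (rotFlow s p.1, p.2))
        (fderiv ℝ b p ((p.1.2, -p.1.1), 0)) 0 := by
      have := hasDerivAt_along (hb.differentiable (by simp)) p 0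
      rwa [rotFlow_zero] at this
    have h3 : HasDerivAt (fun s => bt (rotFlow s p.1, p.2))
        (fderiv ℝ bt p ((p.1.2, -p.1.1), 0)) 0 := by
      have := hasDerivAt_along (hbt.differentiable (by simp)) p 0
      rwa [rotFlow_zero] at this
    have h4 := h3.div_const (Dfn f₀ p)
    have h2 : (fun s => b (rotFlow s p.1, p.2))
        = fun s => bt (rotFlow s p.1, p.2) / Dfn f₀ p := by
      funext s
      rw [hbdef]
      simp only
      rw [Dfn_invariant f₀ s p]
    rw [h2] at h1
    rw [h1.unique h4, hbtJ p]
  -- the equation for b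
  have heq : ∀ p : (ℝ × ℝ) × ℝ,
      g p = flowAvg g p +
        pbrk (fun q : (ℝ × ℝ) × ℝ => f₀ ((q.1.1^2 + q.1.2^2)/2, q.2)) b p := by
    intro p
    rw [pbrk_eq hf₀ b p, hbJ p, mul_div_cancel₀ _ (hDne p), hhdef]
    ring
  -- the average of b is zero
  have havgb : ∀ p, flowAvg b p = 0 := by
    intro p
    have e1 : ∀ t : ℝ, b (rotFlow t p.1, p.2) = bt (rotFlow t p.1, p.2) / Dfn f₀ p := by
      intro t
      rw [hbdef]
      simp only
      rw [Dfn_invariant f₀ t p]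
    have e2 : flowAvg b p = flowAvg bt p / Dfn f₀ p := by
      unfold flowAvg
      simp only [e1]
      rw [intervalIntegral.integral_div]
      ring
    have e3 : flowAvg bt p = 0 := by
      rw [hbtdef, flowAvg_sub hB.continuous hBavg.continuous p,
        flowAvg_of_invariant (fun s q => flowAvg_flow B s q) p, sub_self]
    rw [e2, e3, zero_div]
  refine ⟨b, ⟨hb, havgb, heq⟩, ?_⟩
  rintro b' ⟨hb', havgb', heq'⟩
  -- uniqueness
  have hJeq : ∀ p, fderiv ℝ b' p ((p.1.2, -p.1.1), 0) = fderiv ℝ b p ((p.1.2, -p.1.1), 0) := by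
    intro p
    have k1 := heq' p
    have k2 := heq p
    rw [pbrk_eq hf₀ b' p] at k1
    rw [pbrk_eq hf₀ b p] at k2
    have : Dfn f₀ p * fderiv ℝ b' p ((p.1.2, -p.1.1), 0)
        = Dfn f₀ p * fderiv ℝ b p ((p.1.2, -p.1.1), 0) := by linarith
    exact mul_left_cancel₀ (hDne p) this
  set δ : (ℝ × ℝ) × ℝ → ℝ := fun q => b' q - b q with hδdef
  have hδ : ContDiff ℝ (⊤ : ℕ∞) δ := hb'.sub hb
  have hδJ : ∀ p, fderiv ℝ δ p ((p.1.2, -p.1.1), 0) = 0 := by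
    intro p
    have hsub : fderiv ℝ δ p = fderiv ℝ b' p - fderiv ℝ b p := by
      rw [hδdef]
      exact fderiv_sub ((hb'.differentiable (by simp)) p) ((hb.differentiable (by simp)) p)
    rw [hsub]
    simp only [ContinuousLinearMap.coe_sub', Pi.sub_apply]
    rw [hJeq p, sub_self]
  have hδinv : ∀ (s : ℝ) (p : (ℝ × ℝ) × ℝ), δ (rotFlow s p.1, p.2) = δ p := by
    intro s p
    have hσ : ∀ t : ℝ, HasDerivAt (fun t => δ (rotFlow t p.1, p.2)) 0 t := by
      intro t
      have h1 := hasDerivAt_along (hδ.differentiable (by simp)) p t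
      have h0 : fderiv ℝ δ (rotFlow t p.1, p.2)
          (((rotFlow t p.1).2, -(rotFlow t p.1).1), 0) = 0 := hδJ (rotFlow t p.1, p.2)
      rwa [h0] at h1
    have hconst := is_const_of_deriv_eq_zero (fun t => (hσ t).differentiableAt)
      (fun t => (hσ t).deriv) s 0
    simpa [rotFlow_zero] using hconst
  funext p
  have hz := flowAvg_of_invariant hδinv p
  rw [hδdef, flowAvg_sub hb'.continuous hb.continuous p, havgb' p, havgb p, sub_self] at hz
  simp only at hz
  linarith
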